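/- Let X be a graph with vertex set partitioned into three independent sets U, V, W and let H_6 be the reflexive digraph on {x1,x2,x3,x4} with all loops, symmetric arcs between x1,x2 and between x1,x3 and between x3,x4, arc x2x3 (but not x3x2), and no arcs between x2,x4 and none between x1,x4 except as specified. Let G be obtained from X by orienting each U–V edge from U to V, replacing each U–W edge uw by a path u → m_{uw} → w through a new vertex m_{uw}, and orienting each V–W edge from W to V. With costs c_{x1}(u)=0, c_{x2}(u)=1 for u ∈ U; c_{x3}(v)=0, c_{x1}(v)=1 for v ∈ V; c_{x4}(w)=0, c_{x3}(w)=1 for w ∈ W; c_{x1}(m_{uw})=c_{x4}(m_{uw})=|V(X)|; all other costs of vertices of X equal to |V(X)|, and all other costs of the new vertices m equal to 0: if X has an independent set of size k, then G admits a homomorphism to H_6 of cost at most |V(X)| − k. -/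
import Mathlib


/-- The reflexive digraph $H_6$ on $x_1,x_2,x_3,x_4$ (identified with 0,1,2,3):
all loops, symmetric arcs $x_1x_2, x_1x_3, x_3x_4$, single arc $x_2x_3$,
no arcs between $x_2,x_4$ nor between $x_1,x_4$. -/
def H6 : Fin 4 → Fin 4 → Prop := fun a b =>
  a = b ∨ (a, b) ∈
    ({(0,1),(1,0),(0,2),(2,0),(2,3),(3,2),(1,2)} : Set (Fin 4 × Fin 4))

/-- One direction of the reduction from independent set to MinHOM($H_6$): if $X$ has
an independent set of size $k$, then $G$ (obtained by orienting $U$–$V$ edges from $U$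
to $V$, replacing each $U$–$W$ edge $uw$ by a path $u → m_{uw} → w$, and orienting
$V$–$W$ edges from $W$ to $V$), with the indicated costs, admits a homomorphism to
$H_6$ of cost at most $|V(X)| - k$. -/
theorem stmt17 {X : Type*} [Fintype X] [DecidableEq X]
    (Adj : X → X → Prop) (hsymm : ∀ a b, Adj a b → Adj b a)
    (U V W : Finset X)
    (hpart : ∀ x : X, (x ∈ U ∧ x ∉ V ∧ x ∉ W) ∨ (x ∉ U ∧ x ∈ V ∧ x ∉ W) ∨
      (x ∉ U ∧ x ∉ V ∧ x ∈ W))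
    (hU : ∀ a ∈ U, ∀ b ∈ U, ¬ Adj a b)
    (hV : ∀ a ∈ V, ∀ b ∈ V, ¬ Adj a b)
    (hW : ∀ a ∈ W, ∀ b ∈ W, ¬ Adj a b)
    (G : (X ⊕ X × X) → (X ⊕ X × X) → Prop)
    (hG : ∀ p q, G p q ↔
      ((∃ a b, p = Sum.inl a ∧ q = Sum.inl b ∧ Adj a b ∧
          ((a ∈ U ∧ b ∈ V) ∨ (a ∈ W ∧ b ∈ V))) ∨
       (∃ a b, p = Sum.inl a ∧ q = Sum.inr (a, b) ∧ Adj a b ∧ a ∈ U ∧ b ∈ W) ∨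
       (∃ a b, p = Sum.inr (a, b) ∧ q = Sum.inl b ∧ Adj a b ∧ a ∈ U ∧ b ∈ W)))
    (c : Fin 4 → (X ⊕ X × X) → ℤ)
    (hcX : ∀ (i : Fin 4) (x : X), c i (Sum.inl x) =
      if x ∈ U then (if i = 0 then 0 else if i = 1 then 1 else (Fintype.card X : ℤ))
      else if x ∈ V then (if i = 2 then 0 else if i = 0 then 1 else (Fintype.card X : ℤ))
      else (if i = 3 then 0 else if i = 2 then 1 else (Fintype.card X : ℤ)))
    (hcM : ∀ (i : Fin 4) (m : X × X), c i (Sum.inr m) =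
      if i = 0 ∨ i = 3 then (Fintype.card X : ℤ) else 0)
    (k : ℕ)
    (I : Finset X) (hI : ∀ a ∈ I, ∀ b ∈ I, ¬ Adj a b) (hIcard : I.card = k) :
    ∃ f : (X ⊕ X × X) → Fin 4, (∀ p q, G p q → H6 (f p) (f q)) ∧
      ∑ p, c (f p) p ≤ (Fintype.card X : ℤ) - k := by
  classical
  set g : X → Fin 4 := fun x =>
    if x ∈ U then (if x ∈ I then 0 else 1)
    else if x ∈ W then (if x ∈ I then 3 else 2) else 2 with hg
  refine ⟨Sum.elim g (fun _ : X × X => (2 : Fin 4)), ?_, ?_⟩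
  · intro p q hpq
    rw [hG] at hpq
    rcases hpq with ⟨a, b, hp, hq, _, hab⟩ | ⟨a, b, hp, hq, _, ha, _⟩ |
      ⟨a, b, hp, hq, _, _, hb⟩
    · subst hp; subst hq
      rcases hab with ⟨ha, hb⟩ | ⟨ha, hb⟩
      · -- a ∈ U, b ∈ V
        have hbU : b ∉ U := by rcases hpart b with ⟨_, h, _⟩ | ⟨h, _, _⟩ | ⟨h, _, _⟩ <;>
          first | exact h | exact absurd hb h
        have hbW : b ∉ W := by rcases hpart b with ⟨_, h, _⟩ | ⟨_, _, h⟩ | ⟨_, h, _⟩ <;>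
          first | exact h | exact absurd hb h
        simp only [Sum.elim_inl, hg, if_pos ha, if_neg hbU, if_neg hbW]
        by_cases hai : a ∈ I <;> simp [hai, H6]
      · -- a ∈ W, b ∈ V
        have haU : a ∉ U := by rcases hpart a with ⟨_, _, h⟩ | ⟨h, _, _⟩ | ⟨h, _, _⟩ <;>
          first | exact h | exact absurd ha h
        have hbU : b ∉ U := by rcases hpart b with ⟨_, h, _⟩ | ⟨h, _, _⟩ | ⟨h, _, _⟩ <;>
          first | exact h | exact absurd hb h
        have hbW : b ∉ W := by rcases hpart b with ⟨_, h, _⟩ | ⟨_, _, h⟩ | ⟨_, h, _⟩ <;>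
          first | exact h | exact absurd hb h
        simp only [Sum.elim_inl, hg, if_neg haU, if_pos ha, if_neg hbU, if_neg hbW]
        by_cases hai : a ∈ I <;> simp [hai, H6]
    · subst hp; subst hq
      simp only [Sum.elim_inl, Sum.elim_inr, hg, if_pos ha]
      by_cases hai : a ∈ I <;> simp [hai, H6]
    · subst hp; subst hq
      have hbU : b ∉ U := by rcases hpart b with ⟨_, _, h⟩ | ⟨h, _, _⟩ | ⟨h, _, _⟩ <;>
        first | exact h | exact absurd hb h
      simp only [Sum.elim_inl, Sum.elim_inr, hg, if_neg hbU, if_pos hb]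
      by_cases hbi : b ∈ I <;> simp [hbi, H6]
  · rw [Fintype.sum_sum_type]
    have hm : ∀ m : X × X, c (Sum.elim g (fun _ : X × X => (2 : Fin 4)) (Sum.inr m)) (Sum.inr m) = 0 := by
      intro m
      simp only [Sum.elim_inr, hcM]
      rw [if_neg (by decide)]
    have hx : ∀ x : X, c (Sum.elim g (fun _ : X × X => (2 : Fin 4)) (Sum.inl x)) (Sum.inl x) ≤
        (if x ∈ I then 0 else 1) := by
      intro x
      simp only [Sum.elim_inl, hcX, hg]
      rcases hpart x with ⟨h1, h2, h3⟩ | ⟨h1, h2, h3⟩ | ⟨h1, h2, h3⟩ <;>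
        by_cases hxi : x ∈ I <;>
        simp [h1, h2, h3, hxi] <;> norm_num
    calc ∑ x : X, c (Sum.elim g (fun _ : X × X => (2 : Fin 4)) (Sum.inl x)) (Sum.inl x) +
          ∑ m : X × X, c (Sum.elim g (fun _ : X × X => (2 : Fin 4)) (Sum.inr m)) (Sum.inr m)
        ≤ (∑ x : X, if x ∈ I then (0:ℤ) else 1) + 0 :=
          add_le_add (Finset.sum_le_sum fun x _ => hx x)
            (le_of_eq (Finset.sum_eq_zero fun m _ => hm m))
      _ = (Fintype.card X : ℤ) - k := by
          rw [add_zero]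
          have : (∑ x : X, if x ∈ I then (0:ℤ) else 1) =
              ∑ x : X, ((1:ℤ) - if x ∈ I then 1 else 0) := by
            apply Finset.sum_congr rfl
            intro x _
            by_cases hxi : x ∈ I <;> simp [hxi]
          rw [this, Finset.sum_sub_distrib]
          simp [Finset.sum_ite_mem, Finset.card_univ, hIcard]
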